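/- arXiv:2103.01613 — 4 statements merged into one kernel-verified Lean document; each statement's English description precedes it below -/
import Mathlib

section
/- Let d : X → B be a crossed module of groups, p₂ : X ⋊ B → B the projection (x, b) ↦ b, p₁ : X ⋊ B → B given by p₁(x, b) = d(x)b, and i : B → X ⋊ B the inclusion b ↦ (1, b). Then the kernels of p₁ and p₂ commute elementwise: for any k ∈ ker p₁ and k' ∈ ker p₂, k k' = k' k. -/
/-- For a crossed module of groups `d : X → B`, the kernels of
`p₁(x,b) = d(x)b` and of the projection `p₂(x,b) = b` on `X ⋊ B` commute elementwise. -/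
theorem crossedModule_kernels_commute {X B : Type*} [Group X] [Group B]
    (d : X →* B) (φ : B →* MulAut X)
    (hcm1 : ∀ (b : B) (x : X), d (φ b x) = b * d x * b⁻¹)
    (hcm2 : ∀ x y : X, φ (d x) y = x * y * x⁻¹) :
    ∀ k k' : X ⋊[φ] B, d k.left * k.right = 1 → k'.right = 1 → k * k' = k' * k := by
  rintro ⟨x, b⟩ ⟨y, b'⟩ h1 h2
  simp only at h1 h2
  subst h2
  have hb : b = (d x)⁻¹ := eq_inv_of_mul_eq_one_right h1
  subst hb
  ext <;> simp [SemidirectProduct.mul_left, SemidirectProduct.mul_right]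
  have h2 : φ (d x) (x⁻¹ * y * x) = y := by rw [hcm2]; group
  have h3 : (φ (d x))⁻¹ y = x⁻¹ * y * x := by
    conv_lhs => rw [← h2]
    rw [← MulAut.mul_apply, inv_mul_cancel, MulAut.one_apply]
  rw [show (φ (d x)).symm y = x⁻¹ * y * x from h3]
  group
end

section
/- Let (B, X, d) be a Hopf crossed module of cocommutative Hopf algebras. Then its restriction to primitive elements is a crossed module of Lie algebras: for primitive b ∈ B and primitive x, y ∈ X, d(b ▷ x) = [b, d(x)] and d(x) ▷ y = [x, y]. -/
open TensorProduct

lemma aux_antipode_one {K A : Type*} [CommRing K] [Ring A] [HopfAlgebra K A] :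
    HopfAlgebra.antipode (R := K) (1 : A) = 1 := by
  have h := HopfAlgebra.mul_antipode_rTensor_comul_apply (R := K) (A := A) (1 : A)
  simpa [Algebra.TensorProduct.one_def] using h

lemma aux_counit_smul {K A : Type*} [CommRing K] [Ring A] [HopfAlgebra K A]
    {a : A} (ha : Coalgebra.comul (R := K) a = a ⊗ₜ[K] (1 : A) + (1 : A) ⊗ₜ[K] a) :
    (Coalgebra.counit (R := K) a) • (1 : A) = 0 := by
  have h := Coalgebra.rTensor_counit_comul (R := K) a
  rw [ha] at h
  simp only [map_add, LinearMap.rTensor_tmul, Bialgebra.counit_one] at h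
  have h2 : (Coalgebra.counit (R := K) a) ⊗ₜ[K] (1 : A) = (0 : K ⊗[K] A) := by
    have h3 : (Coalgebra.counit (R := K) a) ⊗ₜ[K] (1 : A) + (1 : K) ⊗ₜ[K] a - (1 : K) ⊗ₜ[K] a
        = (1 : K) ⊗ₜ[K] a - (1 : K) ⊗ₜ[K] a := by rw [h]
    simpa using h3
  have := congrArg (TensorProduct.lid K A) h2
  simpa using this

lemma aux_antipode_prim {K A : Type*} [CommRing K] [Ring A] [HopfAlgebra K A]
    {a : A} (ha : Coalgebra.comul (R := K) a = a ⊗ₜ[K] (1 : A) + (1 : A) ⊗ₜ[K] a) :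
    HopfAlgebra.antipode (R := K) a = -a := by
  have h := HopfAlgebra.mul_antipode_rTensor_comul_apply (R := K) a
  rw [ha] at h
  simp only [map_add, LinearMap.rTensor_tmul, LinearMap.mul'_apply, aux_antipode_one,
    mul_one, one_mul, Algebra.linearMap_apply, Algebra.algebraMap_eq_smul_one,
    aux_counit_smul ha] at h
  exact eq_neg_of_add_eq_zero_left h

/-- A Hopf crossed module `(B, X, d)` of cocommutative Hopf algebras restricts to a crossed
module of Lie algebras on primitive elements: for primitive `b ∈ B` and primitive
`x, y ∈ X`, `d(b ▷ x) = [b, d(x)]` and `d(x) ▷ y = [x, y]`. -/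
theorem hopf_crossed_module_restricts_to_lie_crossed_module
    {K B X : Type*} [Field K] [Ring B] [Ring X] [HopfAlgebra K B] [HopfAlgebra K X]
    (hcocB : ∀ b : B, (TensorProduct.comm K B B) (Coalgebra.comul b) = Coalgebra.comul b)
    (hcocX : ∀ x : X, (TensorProduct.comm K X X) (Coalgebra.comul x) = Coalgebra.comul x)
    (d : X →ₐ[K] B)
    (hd_comul : ∀ x : X, Coalgebra.comul (d x) =
      TensorProduct.map d.toLinearMap d.toLinearMap (Coalgebra.comul x))
    (hd_counit : ∀ x : X,
      Coalgebra.counit (R := K) (d x) = Coalgebra.counit (R := K) x)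
    (act : B ⊗[K] X →ₗ[K] X)
    -- (CM1): d(b ▷ x) = b₁ d(x) S(b₂)
    (hCM1 : ∀ (b : B) (x : X), d (act (b ⊗ₜ[K] x)) =
      (LinearMap.mul' K B)
        ((TensorProduct.map LinearMap.id (LinearMap.mul' K B))
          ((TensorProduct.map LinearMap.id
              (TensorProduct.map d.toLinearMap (HopfAlgebra.antipode (R := K))))
            ((TensorProduct.map LinearMap.id (TensorProduct.comm K B X).toLinearMap)
              ((TensorProduct.assoc K B B X)
                ((TensorProduct.map Coalgebra.comul LinearMap.id) (b ⊗ₜ[K] x)))))))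
    -- (CM2): d(y) ▷ x = y₁ x S(y₂)
    (hCM2 : ∀ (y x : X), act ((d y) ⊗ₜ[K] x) =
      (LinearMap.mul' K X)
        ((TensorProduct.map LinearMap.id (LinearMap.mul' K X))
          ((TensorProduct.map LinearMap.id
              (TensorProduct.map LinearMap.id (HopfAlgebra.antipode (R := K))))
            ((TensorProduct.map LinearMap.id (TensorProduct.comm K X X).toLinearMap)
              ((TensorProduct.assoc K X X X)
                ((TensorProduct.map Coalgebra.comul LinearMap.id) (y ⊗ₜ[K] x))))))) :
    (∀ (b : B) (x : X),
      Coalgebra.comul (R := K) b = b ⊗ₜ[K] (1 : B) + (1 : B) ⊗ₜ[K] b →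
        d (act (b ⊗ₜ[K] x)) = b * d x - d x * b) ∧
    (∀ x y : X,
      Coalgebra.comul (R := K) x = x ⊗ₜ[K] (1 : X) + (1 : X) ⊗ₜ[K] x →
        act ((d x) ⊗ₜ[K] y) = x * y - y * x) := by
  constructor
  · intro b x hb
    rw [hCM1]
    simp only [TensorProduct.map_tmul, LinearMap.id_coe, id_eq, hb, add_tmul, map_add,
      TensorProduct.assoc_tmul, LinearEquiv.coe_coe, TensorProduct.comm_tmul,
      LinearMap.mul'_apply, AlgHom.toLinearMap_apply, aux_antipode_one, aux_antipode_prim hb]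
    noncomm_ring
  · intro x y hx
    rw [hCM2]
    simp only [TensorProduct.map_tmul, LinearMap.id_coe, id_eq, hx, add_tmul, map_add,
      TensorProduct.assoc_tmul, LinearEquiv.coe_coe, TensorProduct.comm_tmul,
      LinearMap.mul'_apply, aux_antipode_one, aux_antipode_prim hx]
    noncomm_ring
end

section
/- Let (L, M, N, P, h, λ, λ', μ, ν) be a crossed square of groups. Then for all m ∈ M, n ∈ N and l ∈ L: (m ▷ (n ▷ l)) · h(m, n) = h(m, n) · (n ▷ (m ▷ l)), where m ▷ l := μ(m) ▷ l and n ▷ l := ν(n) ▷ l. -/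
/-- A crossed square of groups (Loday), including the `P`-equivariance of `λ` and `λ'`. -/
structure IsGroupCrossedSquare {L M N P : Type*} [Group L] [Group M] [Group N] [Group P]
    (lam : L →* M) (lam' : L →* N) (mu : M →* P) (nu : N →* P)
    (aL : P →* MulAut L) (aM : P →* MulAut M) (aN : P →* MulAut N)
    (h : M → N → L) : Prop where
  square_comm : ∀ l, mu (lam l) = nu (lam' l)
  lam_equiv : ∀ p l, lam (aL p l) = aM p (lam l)
  lam'_equiv : ∀ p l, lam' (aL p l) = aN p (lam' l)
  mu_cm1 : ∀ p m, mu (aM p m) = p * mu m * p⁻¹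
  mu_cm2 : ∀ m m', aM (mu m) m' = m * m' * m⁻¹
  nu_cm1 : ∀ p n, nu (aN p n) = p * nu n * p⁻¹
  nu_cm2 : ∀ n n', aN (nu n) n' = n * n' * n⁻¹
  kappa_cm1 : ∀ p l, mu (lam (aL p l)) = p * mu (lam l) * p⁻¹
  kappa_cm2 : ∀ l l', aL (mu (lam l)) l' = l * l' * l⁻¹
  lam_h : ∀ m n, lam (h m n) = m * aM (nu n) m⁻¹
  lam'_h : ∀ m n, lam' (h m n) = aN (mu m) n * n⁻¹
  h_lam : ∀ l n, h (lam l) n = l * aL (nu n) l⁻¹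
  h_lam' : ∀ m l, h m (lam' l) = aL (mu m) l * l⁻¹
  h_mul_right : ∀ m n n', h m (n * n') = h m n * aL (nu n) (h m n')
  h_mul_left : ∀ m m' n, h (m * m') n = aL (mu m) (h m' n) * h m n
  h_equiv : ∀ p m n, aL p (h m n) = h (aM p m) (aN p n)

/-- In a crossed square of groups, `(m ▷ (n ▷ l)) · h(m, n) = h(m, n) · (n ▷ (m ▷ l))`,
where `m ▷ l := μ(m) ▷ l` and `n ▷ l := ν(n) ▷ l`. -/
theorem crossedSquare_braiding
    {L M N P : Type*} [Group L] [Group M] [Group N] [Group P]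
    (lam : L →* M) (lam' : L →* N) (mu : M →* P) (nu : N →* P)
    (aL : P →* MulAut L) (aM : P →* MulAut M) (aN : P →* MulAut N)
    (h : M → N → L)
    (hsq : IsGroupCrossedSquare lam lam' mu nu aL aM aN h) :
    ∀ (m : M) (n : N) (l : L),
      aL (mu m) (aL (nu n) l) * h m n = h m n * aL (nu n) (aL (mu m) l) := by
  intro m n l
  have e2 : n * lam' l = lam' (aL (nu n) l) * n := by
    rw [hsq.lam'_equiv, hsq.nu_cm2]; group
  have e1 : h m (n * lam' l) = h m n * aL (nu n) (aL (mu m) l * l⁻¹) := by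
    rw [hsq.h_mul_right, hsq.h_lam']
  have e3 : h m (n * lam' l)
      = (aL (mu m) (aL (nu n) l) * (aL (nu n) l)⁻¹)
        * (aL (nu n) l * h m n * (aL (nu n) l)⁻¹) := by
    rw [e2, hsq.h_mul_right, hsq.h_lam', ← hsq.square_comm, hsq.kappa_cm2]
  have e : h m n * (aL (nu n) (aL (mu m) l) * (aL (nu n) l)⁻¹)
      = (aL (mu m) (aL (nu n) l) * (aL (nu n) l)⁻¹)
        * (aL (nu n) l * h m n * (aL (nu n) l)⁻¹) := by
    rw [← e3, e1, map_mul, map_inv]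
  have e' : h m n * aL (nu n) (aL (mu m) l) * (aL (nu n) l)⁻¹
      = aL (mu m) (aL (nu n) l) * h m n * (aL (nu n) l)⁻¹ := by
    rw [mul_assoc]; rw [e]; group
  exact (mul_right_cancel e').symm
end

section
/- Let (L, M, N, P, h) be a 2-action of groups. Then the formula (m, p) ▷ (l, n) := ((m ▷ (p ▷ l)) · h(m, p ▷ n), p ▷ n) defines an action of the semidirect product M ⋊ P on the semidirect product L ⋊ N by group automorphisms. -/
section helpers

variable {L M N P : Type*} [Group L] [Group M] [Group N] [Group P]
variable (pL : P →* MulAut L) (pM : P →* MulAut M) (pN : P →* MulAut N)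
variable (mL : M →* MulAut L) (nL : N →* MulAut L) (h : M → N → L)

private def tfAux (m : M) (p : P) (x : L ⋊[nL] N) : L ⋊[nL] N :=
  ⟨mL m (pL p x.left) * h m (pN p x.right), pN p x.right⟩

private lemma tfAux_mul
    (compatN : ∀ (p : P) (n : N) (l : L), nL (pN p n) (pL p l) = pL p (nL n l))
    (h_mul_right : ∀ (m : M) (n n' : N), h m (n * n') = h m n * nL n (h m n'))
    (braid : ∀ (m : M) (n : N) (l : L),
      mL m (nL n l) * h m n = h m n * nL n (mL m l))
    (m : M) (p : P) (x y : L ⋊[nL] N) :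
    tfAux pL pN mL nL h m p (x * y)
      = tfAux pL pN mL nL h m p x * tfAux pL pN mL nL h m p y := by
  ext
  · show mL m (pL p (x.left * nL x.right y.left)) * h m (pN p (x.right * y.right))
      = (mL m (pL p x.left) * h m (pN p x.right))
        * nL (pN p x.right) (mL m (pL p y.left) * h m (pN p y.right))
    rw [map_mul, map_mul, map_mul, map_mul, h_mul_right, ← compatN]
    have key := braid m (pN p x.right) (pL p y.left)
    calc mL m (pL p x.left) * mL m (nL (pN p x.right) (pL p y.left))
          * (h m (pN p x.right) * nL (pN p x.right) (h m (pN p y.right)))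
        = mL m (pL p x.left) * (mL m (nL (pN p x.right) (pL p y.left))
            * h m (pN p x.right)) * nL (pN p x.right) (h m (pN p y.right)) := by
          group
      _ = mL m (pL p x.left) * (h m (pN p x.right)
            * nL (pN p x.right) (mL m (pL p y.left)))
            * nL (pN p x.right) (h m (pN p y.right)) := by rw [key]
      _ = mL m (pL p x.left) * h m (pN p x.right)
            * (nL (pN p x.right) (mL m (pL p y.left))
              * nL (pN p x.right) (h m (pN p y.right))) := by group
  · show pN p (x.right * y.right) = pN p x.right * pN p y.right
    rw [map_mul]

private lemma tfAux_comp
    (compatM : ∀ (p : P) (m : M) (l : L), mL (pM p m) (pL p l) = pL p (mL m l))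
    (h_equiv : ∀ (p : P) (m : M) (n : N), h (pM p m) (pN p n) = pL p (h m n))
    (h_mul_left : ∀ (m m' : M) (n : N), h (m * m') n = mL m (h m' n) * h m n)
    (g g' : M ⋊[pM] P) (x : L ⋊[nL] N) :
    tfAux pL pN mL nL h g.left g.right (tfAux pL pN mL nL h g'.left g'.right x)
      = tfAux pL pN mL nL h (g * g').left (g * g').right x := by
  ext
  · show mL g.left (pL g.right (mL g'.left (pL g'.right x.left)
        * h g'.left (pN g'.right x.right)))
        * h g.left (pN g.right (pN g'.right x.right))
      = mL (g.left * pM g.right g'.left) (pL (g.right * g'.right) x.left)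
        * h (g.left * pM g.right g'.left) (pN (g.right * g'.right) x.right)
    rw [map_mul mL, map_mul pL, map_mul pN, MulAut.mul_apply, MulAut.mul_apply,
      MulAut.mul_apply, h_mul_left, compatM, h_equiv, map_mul (pL g.right),
      map_mul (mL g.left), mul_assoc]
  · show pN g.right (pN g'.right x.right) = pN (g.right * g'.right) x.right
    rw [map_mul]
    rfl

private lemma tfAux_one
    (h_one_left : ∀ n : N, h 1 n = 1) (x : L ⋊[nL] N) :
    tfAux pL pN mL nL h 1 1 x = x := by
  ext
  · show mL 1 (pL 1 x.left) * h 1 (pN 1 x.right) = x.left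
    simp [h_one_left]
  · show pN 1 x.right = x.right
    simp

end helpers

/-- For a 2-action of groups `(L, M, N, P, h)`, the formula
`(m, p) ▷ (l, n) := ((m ▷ (p ▷ l)) · h(m, p ▷ n), p ▷ n)` defines an action of `M ⋊ P`
on `L ⋊ N` by group automorphisms. -/
theorem two_action_gives_action_on_semidirect
    {L M N P : Type*} [Group L] [Group M] [Group N] [Group P]
    (pL : P →* MulAut L) (pM : P →* MulAut M) (pN : P →* MulAut N)
    (mL : M →* MulAut L) (nL : N →* MulAut L)
    (h : M → N → L)
    (compatM : ∀ (p : P) (m : M) (l : L), mL (pM p m) (pL p l) = pL p (mL m l))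
    (compatN : ∀ (p : P) (n : N) (l : L), nL (pN p n) (pL p l) = pL p (nL n l))
    (h_equiv : ∀ (p : P) (m : M) (n : N), h (pM p m) (pN p n) = pL p (h m n))
    (h_one_left : ∀ n : N, h 1 n = 1)
    (h_one_right : ∀ m : M, h m 1 = 1)
    (h_mul_right : ∀ (m : M) (n n' : N), h m (n * n') = h m n * nL n (h m n'))
    (h_mul_left : ∀ (m m' : M) (n : N), h (m * m') n = mL m (h m' n) * h m n)
    (braid : ∀ (m : M) (n : N) (l : L),
      mL m (nL n l) * h m n = h m n * nL n (mL m l)) :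
    ∃ Φ : M ⋊[pM] P →* MulAut (L ⋊[nL] N),
      ∀ (m : M) (p : P) (l : L) (n : N),
        Φ ⟨m, p⟩ ⟨l, n⟩ = ⟨mL m (pL p l) * h m (pN p n), pN p n⟩ := by
  have comp := tfAux_comp pL pM pN mL nL h compatM h_equiv h_mul_left
  refine ⟨MonoidHom.mk' (fun g => ⟨⟨tfAux pL pN mL nL h g.left g.right,
    tfAux pL pN mL nL h g⁻¹.left g⁻¹.right,
    fun x => by rw [comp g⁻¹ g, inv_mul_cancel]; exact tfAux_one pL pN mL nL h h_one_left x,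
    fun x => by rw [comp g g⁻¹, mul_inv_cancel]; exact tfAux_one pL pN mL nL h h_one_left x⟩,
    fun x y => tfAux_mul pL pN mL nL h compatN h_mul_right braid g.left g.right x y⟩)
    (fun g g' => MulEquiv.ext fun x => (comp g g' x).symm), fun m p l n => rfl⟩
end
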